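/- Let F_q be a finite field of odd characteristic, α ∈ F_q a nonsquare, n a divisor of q + 1 with 1 < n < q + 1, and t an element of T_α(F_q) of exact order n. Define, for a point P of T_α over the algebraic closure of F_q, u_{O,t}(P) = 1 + 1/( y(P) − (y(t)/(x(t) − 1)) (x(P) − 1) ). Then the function P ↦ Σ_{k=0}^{n−1} u_{O,t}(P ⊖ kt) is constant on T_α(closure of F_q) outside the subgroup generated by t: there is a constant c ∈ F_q such that this sum equals c for every such P. Moreover, there exist scalars 𝔞 ≠ 0 and 𝔟 in F_q with 𝔞·c + n·𝔟 = 1. -/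

import Mathlib

/-- The group law of the Lucas torus `x² - αy² = 1`. -/
def tmul {F : Type*} [Field F] (α : F) (P Q : F × F) : F × F :=
  (P.1 * Q.1 + α * P.2 * Q.2, P.1 * Q.2 + Q.1 * P.2)

/-- `k`-fold sum of a point of the Lucas torus with itself ("multiplication by `k`"). -/
def tpow {F : Type*} [Field F] (α : F) (k : ℕ) (P : F × F) : F × F :=
  (tmul α P)^[k] (1, 0)

/-- Difference `P ⊖ Q` in the Lucas torus group law (the inverse of `(x,y)` is `(x,-y)`). -/
def tsub {F : Type*} [Field F] (α : F) (P Q : F × F) : F × F :=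
  tmul α P (Q.1, -Q.2)

/-!
Over the algebraic closure choose `S` with `S² = α`. Then `P ↦ x(P) + S y(P)` is an injective
homomorphism from the torus to the multiplicative group, sending `t` to some `τ` with `τⁿ = 1`.
In this coordinate `w` the function `u_{O,t} - 1` equals `S w/(w - 1) - S w/(w - τ)`, and along
the orbit `w = z/τᵏ` of `P ⊖ kt` these differences telescope to zero, so the sum is `n`.
Since `n ∣ q + 1`, `n` is prime to the characteristic, so `𝔞 = 1` and `𝔟 = 1/n - 1` work.
-/

section LucasTorus

variable {F : Type*} [Field F]

/-- `x + y√α`, where `S` plays the role of `√α`. -/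
def torusEmb (S : F) (P : F × F) : F :=
  P.1 + S * P.2

/-- `u_{O,t} = 1 + 1 / chordFn t`. -/
def chordFn (t Q : F × F) : F :=
  Q.2 - t.2 / (t.1 - 1) * (Q.1 - 1)

theorem tpow_succ (α : F) (k : ℕ) (P : F × F) :
    tpow α (k + 1) P = tmul α P (tpow α k P) := by
  simp only [tpow, Function.iterate_succ_apply']

theorem map_tpow {E : Type*} [Field E] (f : F →+* E) (α : F) (k : ℕ) (P : F × F) :
    ((f (tpow α k P).1, f (tpow α k P).2) : E × E) = tpow (f α) k (f P.1, f P.2) := by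
  induction k with
  | zero => simp [tpow]
  | succ k ih => simp only [tpow_succ, tmul, ← ih, map_add, map_mul]

variable {α S : F} {P Q : F × F}

theorem tmul_mem (hP : P.1 ^ 2 - α * P.2 ^ 2 = 1) (hQ : Q.1 ^ 2 - α * Q.2 ^ 2 = 1) :
    (tmul α P Q).1 ^ 2 - α * (tmul α P Q).2 ^ 2 = 1 := by
  simp only [tmul]
  linear_combination (Q.1 ^ 2 - α * Q.2 ^ 2) * hP + hQ

theorem tpow_mem (hP : P.1 ^ 2 - α * P.2 ^ 2 = 1) (k : ℕ) :
    (tpow α k P).1 ^ 2 - α * (tpow α k P).2 ^ 2 = 1 := by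
  induction k with
  | zero => simp [tpow]
  | succ k ih => rw [tpow_succ]; exact tmul_mem hP ih

theorem tsub_mem (hP : P.1 ^ 2 - α * P.2 ^ 2 = 1) (hQ : Q.1 ^ 2 - α * Q.2 ^ 2 = 1) :
    (tsub α P Q).1 ^ 2 - α * (tsub α P Q).2 ^ 2 = 1 :=
  tmul_mem hP (by simpa only [neg_sq] using hQ)

theorem fst_ne_one_of_ne_one (hα : α ≠ 0) (hP : P.1 ^ 2 - α * P.2 ^ 2 = 1)
    (hP1 : P ≠ (1, 0)) : P.1 ≠ 1 := by
  intro h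
  have hy : α * P.2 ^ 2 = 0 := by rw [h] at hP; linear_combination -hP
  exact hP1 (Prod.ext h (pow_eq_zero_iff two_ne_zero |>.mp ((mul_eq_zero.mp hy).resolve_left hα)))

section Embedding

variable (hS : S ^ 2 = α)
include hS

theorem torusEmb_tmul (P Q : F × F) :
    torusEmb S (tmul α P Q) = torusEmb S P * torusEmb S Q := by
  simp only [torusEmb, tmul]
  linear_combination (-P.2 * Q.2) * hS

theorem torusEmb_tpow (P : F × F) (k : ℕ) : torusEmb S (tpow α k P) = torusEmb S P ^ k := by
  induction k with
  | zero => simp [tpow, torusEmb]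
  | succ k ih => rw [tpow_succ, torusEmb_tmul hS, ih, pow_succ']

theorem torusEmb_mul_torusEmb_neg (hP : P.1 ^ 2 - α * P.2 ^ 2 = 1) :
    torusEmb S P * torusEmb S (P.1, -P.2) = 1 := by
  simp only [torusEmb]
  linear_combination hP - P.2 ^ 2 * hS

theorem torusEmb_ne_zero (hP : P.1 ^ 2 - α * P.2 ^ 2 = 1) : torusEmb S P ≠ 0 :=
  left_ne_zero_of_mul_eq_one (torusEmb_mul_torusEmb_neg hS hP)

theorem torusEmb_tsub (P : F × F) (hQ : Q.1 ^ 2 - α * Q.2 ^ 2 = 1) :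
    torusEmb S (tsub α P Q) = torusEmb S P / torusEmb S Q := by
  rw [tsub, torusEmb_tmul hS, div_eq_mul_inv,
    inv_eq_of_mul_eq_one_right (torusEmb_mul_torusEmb_neg hS hQ)]

theorem torusEmb_injOn (h2 : (2 : F) ≠ 0) (hS0 : S ≠ 0) (hP : P.1 ^ 2 - α * P.2 ^ 2 = 1)
    (hQ : Q.1 ^ 2 - α * Q.2 ^ 2 = 1) (hPQ : torusEmb S P = torusEmb S Q) : P = Q := by
  have hconj : torusEmb S (P.1, -P.2) = torusEmb S (Q.1, -Q.2) := by
    rw [← inv_eq_of_mul_eq_one_right (torusEmb_mul_torusEmb_neg hS hP),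
      ← inv_eq_of_mul_eq_one_right (torusEmb_mul_torusEmb_neg hS hQ), hPQ]
  simp only [torusEmb] at hPQ hconj
  refine Prod.ext (mul_left_cancel₀ h2 ?_) (mul_left_cancel₀ (mul_ne_zero h2 hS0) ?_)
  · linear_combination hPQ + hconj
  · linear_combination hPQ - hconj

theorem inv_chordFn_eq (hQ : Q.1 ^ 2 - α * Q.2 ^ 2 = 1)
    {t : F × F} (ht : t.1 ^ 2 - α * t.2 ^ 2 = 1) (ht1 : t.1 ≠ 1)
    (hw1 : torusEmb S Q ≠ 1) (hwτ : torusEmb S Q ≠ torusEmb S t) :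
    (chordFn t Q)⁻¹ = S * torusEmb S Q / (torusEmb S Q - 1)
      - S * torusEmb S Q / (torusEmb S Q - torusEmb S t) := by
  set w := torusEmb S Q with hw
  set τ := torusEmb S t with hτ
  have hident : S * (Q.2 * (t.1 - 1) - t.2 * (Q.1 - 1)) * w * (τ - 1)
      = (w - 1) * (τ - w) * (t.1 - 1) := by
    subst hS
    simp only [hw, hτ, torusEmb]
    linear_combination
      (-(t.1 - 1) * (t.1 + S * t.2)) * hQ + ((Q.1 - 1) * (Q.1 + S * Q.2)) * ht
  have ht1' : t.1 - 1 ≠ 0 := sub_ne_zero.mpr ht1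
  have hw1' : w - 1 ≠ 0 := sub_ne_zero.mpr hw1
  have hwτ' : w - τ ≠ 0 := sub_ne_zero.mpr hwτ
  have hchord : chordFn t Q = (Q.2 * (t.1 - 1) - t.2 * (Q.1 - 1)) / (t.1 - 1) := by
    rw [chordFn]; field_simp
  have hnum : Q.2 * (t.1 - 1) - t.2 * (Q.1 - 1) ≠ 0 := by
    intro h
    rw [h, mul_zero, zero_mul, zero_mul, eq_comm] at hident
    exact mul_ne_zero (mul_ne_zero hw1' (sub_ne_zero.mpr (Ne.symm hwτ))) ht1' hident
  rw [hchord, inv_div, div_sub_div _ _ hw1' hwτ', div_eq_div_iff hnum (mul_ne_zero hw1' hwτ')]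
  linear_combination hident

end Embedding

theorem sum_inv_chordFn_tsub_tpow (h2 : (2 : F) ≠ 0) (hS : S ^ 2 = α) (hS0 : S ≠ 0)
    {t : F × F} (ht : t.1 ^ 2 - α * t.2 ^ 2 = 1) (ht0 : t ≠ (1, 0))
    {n : ℕ} (htn : tpow α n t = (1, 0))
    (hP : P.1 ^ 2 - α * P.2 ^ 2 = 1) (hPt : ∀ k : ℕ, P ≠ tpow α k t) :
    ∑ k ∈ Finset.range n, (chordFn t (tsub α P (tpow α k t)))⁻¹ = 0 := by
  set z := torusEmb S P
  set τ := torusEmb S t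
  have hτ0 : τ ≠ 0 := torusEmb_ne_zero hS ht
  have ht1 : t.1 ≠ 1 := fst_ne_one_of_ne_one (hS ▸ pow_ne_zero 2 hS0) ht ht0
  have hτn : τ ^ n = 1 := by rw [← torusEmb_tpow hS, htn]; simp [torusEmb]
  have hzτ : ∀ k : ℕ, z ≠ τ ^ k := fun k h =>
    hPt k (torusEmb_injOn hS h2 hS0 hP (tpow_mem ht k) (by rw [torusEmb_tpow hS]; exact h))
  have hterm : ∀ k : ℕ, (chordFn t (tsub α P (tpow α k t)))⁻¹
      = S * z / (z - τ ^ k) - S * z / (z - τ ^ (k + 1)) := by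
    intro k
    have hw : torusEmb S (tsub α P (tpow α k t)) = z / τ ^ k := by
      rw [torusEmb_tsub hS _ (tpow_mem ht k), torusEmb_tpow hS]
    have hτk : τ ^ k ≠ 0 := pow_ne_zero k hτ0
    have hzk1 : z - τ * τ ^ k ≠ 0 := by rw [← pow_succ']; exact sub_ne_zero.mpr (hzτ (k + 1))
    rw [inv_chordFn_eq hS (tsub_mem hP (tpow_mem ht k)) ht ht1, hw,
      show torusEmb S t = τ from rfl]
    · field_simp
      ring
    · rw [hw, Ne, div_eq_one_iff_eq hτk]; exact hzτ k
    · rw [hw, Ne, div_eq_iff hτk, ← pow_succ']; exact hzτ (k + 1)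
  rw [Finset.sum_congr rfl fun k _ => hterm k,
    Finset.sum_range_sub' (fun k => S * z / (z - τ ^ k)), hτn, pow_zero, sub_self]

end LucasTorus

theorem natCast_ne_zero_of_dvd_card_add_one {K : Type*} [Field K] [Fintype K] {n : ℕ}
    (hdvd : n ∣ Fintype.card K + 1) : (n : K) ≠ 0 := by
  have : (n : K) ∣ 1 := by
    simpa [FiniteField.cast_card_eq_zero] using Nat.cast_dvd_cast (α := K) hdvd
  exact (isUnit_of_dvd_one this).ne_zero

theorem stmt_13_general (K : Type*) [Field K] [Fintype K] (hchar : ringChar K ≠ 2)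
    (α : K) (hα : ¬ IsSquare α)
    (n : ℕ) (hn1 : 1 < n)
    (hdvd : n ∣ Fintype.card K + 1)
    (t : K × K) (ht : t.1 ^ 2 - α * t.2 ^ 2 = 1)
    (htn : tpow α n t = (1, 0))
    (htord : ∀ m : ℕ, 0 < m → m < n → tpow α m t ≠ (1, 0))
    (Ω : Type*) [Field Ω] [Algebra K Ω] [IsAlgClosure K Ω] :
    ∃ c : K,
      (∀ P : Ω × Ω, P.1 ^ 2 - algebraMap K Ω α * P.2 ^ 2 = 1 →
        (∀ k : ℕ, P ≠ (algebraMap K Ω (tpow α k t).1, algebraMap K Ω (tpow α k t).2)) →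
        ∑ k ∈ Finset.range n,
          (1 + ((tsub (algebraMap K Ω α) P
                  ((algebraMap K Ω (tpow α k t).1, algebraMap K Ω (tpow α k t).2))).2 -
                (algebraMap K Ω t.2 / (algebraMap K Ω t.1 - 1)) *
                  ((tsub (algebraMap K Ω α) P
                    ((algebraMap K Ω (tpow α k t).1,
                      algebraMap K Ω (tpow α k t).2))).1 - 1))⁻¹) =
          algebraMap K Ω c) ∧
      ∃ 𝔞 : K, 𝔞 ≠ 0 ∧ ∃ 𝔟 : K, 𝔞 * c + (n : K) * 𝔟 = 1 := by
  set f := algebraMap K Ω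
  have : IsAlgClosed Ω := IsAlgClosure.isAlgClosed K
  obtain ⟨S, hS⟩ : ∃ S : Ω, S ^ 2 = f α := IsAlgClosed.exists_pow_nat_eq _ two_pos
  have hS0 : S ≠ 0 := by
    rintro rfl
    exact hα ⟨0, f.injective (by simpa using hS.symm)⟩
  have h2 : (2 : Ω) ≠ 0 := by
    simpa only [map_ofNat] using (map_ne_zero f).mpr (Ring.two_ne_zero hchar)
  have ht' : (f t.1, f t.2).1 ^ 2 - f α * (f t.1, f t.2).2 ^ 2 = 1 := by
    simpa using congrArg f ht
  have ht0 : (f t.1, f t.2) ≠ (1, 0) := by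
    have ht1 : t ≠ (1, 0) := by simpa [tpow, tmul] using htord 1 one_pos hn1
    contrapose! ht1
    rw [Prod.ext_iff] at ht1 ⊢
    simpa only [map_eq_one_iff f f.injective, map_eq_zero] using ht1
  have htn' : tpow (f α) n (f t.1, f t.2) = (1, 0) := by rw [← map_tpow, htn]; simp
  refine ⟨n, fun P hP hPt => ?_, 1, one_ne_zero, (n : K)⁻¹ - 1, ?_⟩
  · have hsum := sum_inv_chordFn_tsub_tpow h2 hS hS0 ht' ht0 htn' hP
      (by simpa only [map_tpow] using hPt)
    simp only [chordFn] at hsum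
    simp only [map_tpow, Finset.sum_add_distrib, hsum]
    simp
  · rw [one_mul, mul_sub, mul_inv_cancel₀ (natCast_ne_zero_of_dvd_card_add_one hdvd)]
    ring

/-- For `t ∈ T_α(F_q)` of exact order `n` and
`u_{O,t}(P) = 1 + 1/(y(P) - (y(t)/(x(t)-1))(x(P)-1))`, the function
`P ↦ Σ_{k=0}^{n-1} u_{O,t}(P ⊖ kt)` is constant, equal to some `c ∈ F_q`, on the points
of the torus over the algebraic closure lying outside `⟨t⟩`; moreover there are scalars
`𝔞 ≠ 0` and `𝔟` in `F_q` with `𝔞c + n𝔟 = 1`. -/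
theorem stmt_13 (K : Type*) [Field K] [Fintype K] (hchar : ringChar K ≠ 2)
    (α : K) (hα : ¬ IsSquare α)
    (n : ℕ) (hn1 : 1 < n) (hn2 : n < Fintype.card K + 1)
    (hdvd : n ∣ Fintype.card K + 1)
    (t : K × K) (ht : t.1 ^ 2 - α * t.2 ^ 2 = 1)
    (htn : tpow α n t = (1, 0))
    (htord : ∀ m : ℕ, 0 < m → m < n → tpow α m t ≠ (1, 0))
    (Ω : Type*) [Field Ω] [Algebra K Ω] [IsAlgClosure K Ω] :
    ∃ c : K,
      (∀ P : Ω × Ω, P.1 ^ 2 - algebraMap K Ω α * P.2 ^ 2 = 1 →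
        (∀ k : ℕ, P ≠ (algebraMap K Ω (tpow α k t).1, algebraMap K Ω (tpow α k t).2)) →
        ∑ k ∈ Finset.range n,
          (1 + ((tsub (algebraMap K Ω α) P
                  ((algebraMap K Ω (tpow α k t).1, algebraMap K Ω (tpow α k t).2))).2 -
                (algebraMap K Ω t.2 / (algebraMap K Ω t.1 - 1)) *
                  ((tsub (algebraMap K Ω α) P
                    ((algebraMap K Ω (tpow α k t).1,
                      algebraMap K Ω (tpow α k t).2))).1 - 1))⁻¹) =
          algebraMap K Ω c) ∧
      ∃ 𝔞 : K, 𝔞 ≠ 0 ∧ ∃ 𝔟 : K, 𝔞 * c + (n : K) * 𝔟 = 1 :=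
  stmt_13_general K hchar α hα n hn1 hdvd t ht htn htord Ω
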